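/- arXiv:2412.02661 — 2 statements merged into one kernel-verified Lean document; each statement's English description precedes it below -/
import Mathlib

section
/- Let T = (V, E, r) be a rooted tree with |V| ≥ 2 vertices, let v ∈ V, let u ∉ V, and let T' = (V ∪ {u}, E ∪ {(u,v)}, r) be the rooted tree obtained from T by adding the new vertex u together with the edge (u,v). Then aut(T) · 1/(|V| − 1) ≤ aut(T') ≤ aut(T) · |V|. -/
/-- `(V, E, r)` is a rooted tree: the root lies in `V`, all edges of `E` have their
endpoints in `V`, and the graph with edge set `E` induced on `V` is a tree. -/
def IsRootedTreeOn {α : Type*} (V : Finset α) (E : Finset (Sym2 α)) (r : α) : Prop :=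
  r ∈ V ∧ (∀ e ∈ E, ∀ x ∈ e, x ∈ V) ∧
    ((SimpleGraph.fromEdgeSet (E : Set (Sym2 α))).induce (V : Set α)).IsTree

/-- The number of rooted automorphisms of the rooted tree `(V, E, r)`: bijections of the
vertex set (encoded as permutations of the ambient type fixing everything outside `V`)
that fix the root `r` and preserve the edge set `E`. -/
noncomputable def rootedAutCount {α : Type*} (V : Finset α) (E : Finset (Sym2 α)) (r : α) : ℕ :=
  Nat.card {f : Equiv.Perm α // (∀ x, x ∉ V → f x = x) ∧ f r = r ∧
    ∀ e : Sym2 α, e ∈ E ↔ Sym2.map f e ∈ E}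

namespace Stmt0Aux

variable {α : Type*}

/-- The group of rooted automorphisms, as a subgroup of `Equiv.Perm α`. -/
def autGroup (V : Finset α) (E : Finset (Sym2 α)) (r : α) : Subgroup (Equiv.Perm α) where
  carrier := {f | (∀ x, x ∉ V → f x = x) ∧ f r = r ∧
    ∀ e : Sym2 α, e ∈ E ↔ Sym2.map f e ∈ E}
  one_mem' := by simp
  mul_mem' := by
    rintro f g ⟨hf1, hf2, hf3⟩ ⟨hg1, hg2, hg3⟩
    refine ⟨fun x hx => by simp [Equiv.Perm.mul_apply, hg1 x hx, hf1 x hx],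
      by simp [Equiv.Perm.mul_apply, hg2, hf2], fun e => ?_⟩
    have h : Sym2.map (⇑(f * g)) e = Sym2.map f (Sym2.map g e) := by
      rw [Sym2.map_map]; rfl
    rw [h, ← hf3, ← hg3]
  inv_mem' := by
    rintro f ⟨hf1, hf2, hf3⟩
    refine ⟨fun x hx => by nth_rewrite 1 [← hf1 x hx]; exact Equiv.symm_apply_apply f x,
      by nth_rewrite 1 [← hf2]; exact Equiv.symm_apply_apply f r, fun e => ?_⟩
    have h : Sym2.map f (Sym2.map (⇑f⁻¹) e) = e := by
      induction e using Sym2.ind with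
      | _ x y => simp
    rw [hf3 (Sym2.map (⇑f⁻¹) e), h]

lemma mem_autGroup_iff {V : Finset α} {E : Finset (Sym2 α)} {r : α} {f : Equiv.Perm α} :
    f ∈ autGroup V E r ↔ (∀ x, x ∉ V → f x = x) ∧ f r = r ∧
      ∀ e : Sym2 α, e ∈ E ↔ Sym2.map f e ∈ E := Iff.rfl

lemma apply_mem {V : Finset α} {E : Finset (Sym2 α)} {r : α} {f : Equiv.Perm α}
    (hf : f ∈ autGroup V E r) {x : α} (hx : x ∈ V) : f x ∈ V := by
  by_contra h
  have h2 : f (f x) = f x := hf.1 _ h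
  rw [f.injective h2] at h
  exact h hx

lemma autGroup_finite (V : Finset α) (E : Finset (Sym2 α)) (r : α) :
    Finite (autGroup V E r) := by
  refine Finite.of_injective
    (fun f : autGroup V E r => fun x : V => (⟨f.1 x, apply_mem f.2 x.2⟩ : V)) ?_
  intro f g h
  ext x
  by_cases hx : x ∈ V
  · exact congrArg Subtype.val (congrFun h ⟨x, hx⟩)
  · rw [f.2.1 x hx, g.2.1 x hx]

lemma rootedAutCount_eq (V : Finset α) (E : Finset (Sym2 α)) (r : α) :
    rootedAutCount V E r = Nat.card (autGroup V E r) :=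
  Nat.card_congr (Equiv.subtypeEquivRight fun _ => mem_autGroup_iff.symm)

lemma smul_def {V : Finset α} {E : Finset (Sym2 α)} {r : α}
    (g : autGroup V E r) (x : α) : g • x = g.1 x := rfl

end Stmt0Aux

open Stmt0Aux in
/-- If `T = (V, E, r)` is a rooted tree with `|V| ≥ 2`, `v ∈ V`, `u ∉ V`, and
`T' = (V ∪ {u}, E ∪ {(u,v)}, r)` is the rooted tree obtained from `T` by adding the new
vertex `u` and the edge `(u,v)`, then `aut(T)·(1/(|V|−1)) ≤ aut(T') ≤ aut(T)·|V|`. -/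
theorem stmt0 {α : Type*} [DecidableEq α] (V : Finset α) (E : Finset (Sym2 α)) (r v u : α)
    (hT : IsRootedTreeOn V E r) (hV : 2 ≤ V.card) (hv : v ∈ V) (hu : u ∉ V) :
    (rootedAutCount V E r : ℝ) * (1 / ((V.card : ℝ) - 1)) ≤
        (rootedAutCount (insert u V) (insert s(u, v) E) r : ℝ) ∧
      (rootedAutCount (insert u V) (insert s(u, v) E) r : ℝ) ≤
        (rootedAutCount V E r : ℝ) * (V.card : ℝ) := by
  obtain ⟨hr, hE, -⟩ := hT
  set G := autGroup V E r with hG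
  set G' := autGroup (insert u V) (insert s(u, v) E) r with hG'
  haveI : Finite G := autGroup_finite V E r
  haveI : Finite G' := autGroup_finite (insert u V) (insert s(u, v) E) r
  have hur : u ≠ r := fun h => hu (h ▸ hr)
  have huv : u ≠ v := fun h => hu (h ▸ hv)
  -- Lemma A: an automorphism of T fixing v is an automorphism of T'.
  have lemA : ∀ f : Equiv.Perm α, f ∈ G → f v = v → f ∈ G' := by
    rintro f ⟨hf1, hf2, hf3⟩ hfv
    have hfu : f u = u := hf1 u hu
    refine ⟨fun x hx => hf1 x (fun h => hx (Finset.mem_insert_of_mem h)), hf2, fun e => ?_⟩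
    have hmap : Sym2.map (⇑f) s(u, v) = s(u, v) := by simp [hfu, hfv]
    constructor
    · intro he
      rcases Finset.mem_insert.mp he with h | h
      · rw [h, hmap]; exact Finset.mem_insert_self _ _
      · exact Finset.mem_insert_of_mem ((hf3 e).mp h)
    · intro he
      rcases Finset.mem_insert.mp he with h | h
      · have : Sym2.map (⇑f) e = Sym2.map (⇑f) s(u, v) := by rw [h, hmap]
        have he2 : e = s(u, v) := (Sym2.map.injective f.injective) this
        rw [he2]; exact Finset.mem_insert_self _ _
      · exact Finset.mem_insert_of_mem ((hf3 e).mpr h)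
  -- Lemma B: an automorphism of T' fixing u is an automorphism of T.
  have lemB : ∀ f : Equiv.Perm α, f ∈ G' → f u = u → f ∈ G := by
    rintro f ⟨hf1, hf2, hf3⟩ hfu
    refine ⟨fun x hx => ?_, hf2, fun e => ?_⟩
    · by_cases hxu : x = u
      · rw [hxu, hfu]
      · exact hf1 x (by simp [hxu, hx])
    · constructor
      · intro he
        have h2 := (hf3 e).mp (Finset.mem_insert_of_mem he)
        rcases Finset.mem_insert.mp h2 with h | h
        · exfalso
          have humem : u ∈ Sym2.map (⇑f) e := by rw [h]; exact Sym2.mem_mk_left u v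
          obtain ⟨y, hy, hyu⟩ := Sym2.mem_map.mp humem
          have : y = u := f.injective (by rw [hyu, hfu])
          exact hu (hE e he u (this ▸ hy))
        · exact h
      · intro he
        have h2 := (hf3 e).mpr (Finset.mem_insert_of_mem he)
        rcases Finset.mem_insert.mp h2 with h | h
        · exfalso
          have humem : u ∈ Sym2.map (⇑f) e := by
            rw [h]
            exact Sym2.mem_map.mpr ⟨u, Sym2.mem_mk_left u v, hfu⟩
          exact hu (hE _ he u humem)
        · exact h
  -- orbit-stabilizer for G acting on v
  have hosG : (MulAction.stabilizer G v).index * Nat.card (MulAction.stabilizer G v)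
      = Nat.card G := Subgroup.index_mul_card _
  have hidxG : (MulAction.stabilizer G v).index = (MulAction.orbit G v).ncard :=
    MulAction.index_stabilizer G v
  have horbG : (MulAction.orbit G v).ncard ≤ V.card - 1 := by
    by_cases hvr : v = r
    · have hsub : MulAction.orbit G v ⊆ {v} := by
        rintro x ⟨g, rfl⟩
        simp only [Set.mem_singleton_iff, smul_def]
        rw [hvr]; exact g.2.2.1
      calc (MulAction.orbit G v).ncard ≤ ({v} : Set α).ncard :=
            Set.ncard_le_ncard hsub (Set.finite_singleton v)
        _ = 1 := Set.ncard_singleton v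
        _ ≤ V.card - 1 := by omega
    · have hsub : MulAction.orbit G v ⊆ ↑(V.erase r) := by
        rintro x ⟨g, rfl⟩
        show (g : Equiv.Perm α) v ∈ (↑(V.erase r) : Set α)
        simp only [Finset.coe_erase, Set.mem_diff, Set.mem_singleton_iff]
        refine ⟨apply_mem g.2 hv, fun h => hvr (g.1.injective ?_)⟩
        rw [g.2.2.1]
        exact h
      calc (MulAction.orbit G v).ncard ≤ (↑(V.erase r) : Set α).ncard :=
            Set.ncard_le_ncard hsub (V.erase r).finite_toSet
        _ = (V.erase r).card := Set.ncard_coe_finset _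
        _ = V.card - 1 := Finset.card_erase_of_mem hr
  have hstabG : Nat.card (MulAction.stabilizer G v) ≤ Nat.card G' := by
    refine Nat.card_le_card_of_injective
      (fun g : MulAction.stabilizer G v => (⟨g.1.1, lemA g.1.1 g.1.2 g.2⟩ : G')) ?_
    intro a b h
    have h2 : a.1.1 = b.1.1 := congrArg (fun z : ↥G' => (z : Equiv.Perm α)) h
    exact Subtype.ext (Subtype.ext h2)
  have hlow : Nat.card G ≤ (V.card - 1) * Nat.card G' := by
    calc Nat.card G = (MulAction.orbit G v).ncard * Nat.card (MulAction.stabilizer G v) := by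
          rw [← hosG, hidxG]
      _ ≤ (V.card - 1) * Nat.card G' :=
          Nat.mul_le_mul horbG hstabG
  -- orbit-stabilizer for G' acting on u
  have hosG' : (MulAction.stabilizer G' u).index * Nat.card (MulAction.stabilizer G' u)
      = Nat.card G' := Subgroup.index_mul_card _
  have hidxG' : (MulAction.stabilizer G' u).index = (MulAction.orbit G' u).ncard :=
    MulAction.index_stabilizer G' u
  have horbG' : (MulAction.orbit G' u).ncard ≤ V.card := by
    have hsub : MulAction.orbit G' u ⊆ ↑((insert u V).erase r) := by
      rintro x ⟨g, rfl⟩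
      show (g : Equiv.Perm α) u ∈ (↑((insert u V).erase r) : Set α)
      simp only [Finset.coe_erase, Set.mem_diff, Set.mem_singleton_iff]
      refine ⟨apply_mem g.2 (Finset.mem_insert_self u V),
        fun h => hur (g.1.injective ?_)⟩
      rw [g.2.2.1]
      exact h
    calc (MulAction.orbit G' u).ncard ≤ (↑((insert u V).erase r) : Set α).ncard :=
          Set.ncard_le_ncard hsub ((insert u V).erase r).finite_toSet
      _ = ((insert u V).erase r).card := Set.ncard_coe_finset _
      _ = (insert u V).card - 1 :=
          Finset.card_erase_of_mem (Finset.mem_insert_of_mem hr)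
      _ = V.card := by rw [Finset.card_insert_of_notMem hu]; omega
  have hstabG' : Nat.card (MulAction.stabilizer G' u) ≤ Nat.card G := by
    refine Nat.card_le_card_of_injective
      (fun g : MulAction.stabilizer G' u => (⟨g.1.1, lemB g.1.1 g.1.2 g.2⟩ : G)) ?_
    intro a b h
    have h2 : a.1.1 = b.1.1 := congrArg (fun z : ↥G => (z : Equiv.Perm α)) h
    exact Subtype.ext (Subtype.ext h2)
  have hhigh : Nat.card G' ≤ V.card * Nat.card G := by
    calc Nat.card G'
        = (MulAction.orbit G' u).ncard * Nat.card (MulAction.stabilizer G' u) := by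
          rw [← hosG', hidxG']
      _ ≤ V.card * Nat.card G := Nat.mul_le_mul horbG' hstabG'
  -- pass to the reals
  rw [rootedAutCount_eq V E r, rootedAutCount_eq (insert u V) (insert s(u, v) E) r]
  have hc1 : (1 : ℝ) ≤ (V.card : ℝ) := by exact_mod_cast (by omega : 1 ≤ V.card)
  have hpos : (0 : ℝ) < (V.card : ℝ) - 1 := by
    have : (2 : ℝ) ≤ (V.card : ℝ) := by exact_mod_cast hV
    linarith
  constructor
  · rw [mul_one_div, div_le_iff₀ hpos]
    have : (Nat.card G : ℝ) ≤ ((V.card - 1 : ℕ) : ℝ) * (Nat.card G' : ℝ) := by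
      exact_mod_cast hlow
    rwa [Nat.cast_sub (by omega), Nat.cast_one, mul_comm] at this
  · have : (Nat.card G' : ℝ) ≤ (V.card : ℝ) * (Nat.card G : ℝ) := by exact_mod_cast hhigh
    linarith [this]
end

section
/- Let ε_n = 2n^{−1/4} and let N = N(n) be a sequence of natural numbers with N(n) = o(n^{1/4}). Suppose X_n are ℕ-valued random variables satisfying Bin(N, 1/2 − ε_n) ⪯ X_n ⪯ Bin(N, 1/2 + ε_n) for each n. Then for every choice of N1 = N1(n) with 0 ≤ N1 ≤ N, one has P(X_n = N1) = (1 + o(1)) · C(N, N1) · 2^{−N} as n → ∞, where C(N, N1) is the binomial coefficient. -/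
open MeasureTheory

/-- `P(Bin(N, r) ≥ k)`, the upper tail of the binomial distribution. -/
noncomputable def binomTail (N : ℕ) (r : ℝ) (k : ℕ) : ℝ :=
  ∑ j ∈ Finset.Icc k N, (N.choose j : ℝ) * r ^ j * (1 - r) ^ (N - j)

open Finset in

lemma choose_tele (N j : ℕ) (hj : 1 ≤ j) :
    (N.choose j : ℝ) * (2 * (j : ℝ) - (N : ℝ)) =
      (N : ℝ) * (((N - 1).choose (j - 1) : ℕ) : ℝ) - (N : ℝ) * (((N - 1).choose j : ℕ) : ℝ) := by
  rcases Nat.eq_zero_or_pos N with rfl | hN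
  · simp [Nat.choose_eq_zero_of_lt hj]
  rcases le_or_gt j N with hjN | hjN
  · have h1 : N.choose j * j = N * (N - 1).choose (j - 1) := by
      have := Nat.add_one_mul_choose_eq (N - 1) (j - 1)
      rw [Nat.sub_add_cancel hN, Nat.sub_add_cancel hj] at this
      omega
    have h2 : N.choose j * (N - j) = N * (N - 1).choose j := by
      rcases eq_or_lt_of_le hjN with rfl | hjN'
      · rw [Nat.choose_eq_zero_of_lt (by omega : j - 1 < j)]
        simp
      · -- j < N, use symmetry
        have hsym : N.choose (N - j) = N.choose j := Nat.choose_symm hjN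
        have := Nat.add_one_mul_choose_eq (N - 1) (N - j - 1)
        rw [Nat.sub_add_cancel hN, Nat.sub_add_cancel (by omega : 1 ≤ N - j)] at this
        have hsym2 : (N - 1).choose (N - j - 1) = (N - 1).choose j := by
          have h := Nat.choose_symm (show N - j - 1 ≤ N - 1 by omega)
          rw [show N - 1 - (N - j - 1) = j by omega] at h
          exact h.symm
        -- this : N * (N-1).choose (N - j - 1) = N.choose (N - j) * (N - j)
        rw [hsym2, hsym] at this
        omega
    have hc : (2 * (j : ℝ) - (N : ℝ)) = (j : ℝ) - ((N - j : ℕ) : ℝ) := by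
      rw [Nat.cast_sub hjN]; ring
    rw [hc, mul_sub]
    have h1' : (N.choose j : ℝ) * (j : ℝ) = (N : ℝ) * (((N - 1).choose (j - 1) : ℕ) : ℝ) := by
      exact_mod_cast congrArg (Nat.cast : ℕ → ℝ) h1
    have h2' : (N.choose j : ℝ) * ((N - j : ℕ) : ℝ) = (N : ℝ) * (((N - 1).choose j : ℕ) : ℝ) := by
      exact_mod_cast congrArg (Nat.cast : ℕ → ℝ) h2
    rw [h1', h2']
  · rw [Nat.choose_eq_zero_of_lt hjN, Nat.choose_eq_zero_of_lt (by omega : N - 1 < j - 1),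
      Nat.choose_eq_zero_of_lt (by omega : N - 1 < j)]
    simp

lemma tele_sum (N k : ℕ) (hk : 1 ≤ k) :
    ∑ j ∈ Finset.Icc k N, (N.choose j : ℝ) * (2 * (j : ℝ) - (N : ℝ))
      = (N : ℝ) * (((N - 1).choose (k - 1) : ℕ) : ℝ) := by
  rcases Nat.lt_or_ge N k with hNk | hkN
  · rw [Finset.Icc_eq_empty (by omega)]
    rcases Nat.eq_zero_or_pos N with rfl | hN
    · simp
    · rw [Nat.choose_eq_zero_of_lt (by omega : N - 1 < k - 1)]; simp
  · rw [← Finset.Ico_add_one_right_eq_Icc, Finset.sum_Ico_eq_sum_range]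
    have hstep : ∀ i ∈ Finset.range (N + 1 - k),
        (N.choose (k + i) : ℝ) * (2 * ((k + i : ℕ) : ℝ) - (N : ℝ)) =
          (fun i => (N : ℝ) * (((N - 1).choose (k + i - 1) : ℕ) : ℝ)) i
            - (fun i => (N : ℝ) * (((N - 1).choose (k + i - 1) : ℕ) : ℝ)) (i + 1) := by
      intro i _
      simp only
      rw [show k + (i + 1) - 1 = k + i by omega]
      exact choose_tele N (k + i) (by omega)
    rw [Finset.sum_congr rfl hstep, Finset.sum_range_sub']
    rw [show k + (N + 1 - k) - 1 = N by omega]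
    rw [Nat.choose_eq_zero_of_lt (by omega : N - 1 < N)]
    simp


lemma sum_refl (Nn a b : ℕ) (hab : a + b = Nn) (q r c : ℝ) :
    ∑ j ∈ Finset.Icc a b,
      ((Nn.choose j : ℝ) * (q ^ j * r ^ (Nn - j) * c)
        - (Nn.choose j : ℝ) * (r ^ j * q ^ (Nn - j) * c)) = 0 := by
  apply Finset.sum_involution (g := fun j _ => Nn - j)
  · intro j hj
    have hj' := Finset.mem_Icc.mp hj
    have hjN : j ≤ Nn := by omega
    have hc : Nn.choose (Nn - j) = Nn.choose j := Nat.choose_symm hjN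
    have hs : Nn - (Nn - j) = j := by omega
    rw [hc, hs]
    ring
  · intro j hj hne h
    apply hne
    rw [h]
    ring
  · intro j hj
    have hj' := Finset.mem_Icc.mp hj
    rw [Finset.mem_Icc]
    omega
  · intro j hj
    have hj' := Finset.mem_Icc.mp hj
    omega

lemma half_pow (x y : ℝ) (N j : ℕ) (hj : j ≤ N) :
    (x / 2) ^ j * (y / 2) ^ (N - j) = x ^ j * y ^ (N - j) * (2 : ℝ) ^ (-(N : ℤ)) := by
  have h2 : ((2 : ℝ) ^ N)⁻¹ = (2 : ℝ) ^ (-(N : ℤ)) := by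
    rw [zpow_neg, zpow_natCast]
  have hN : (2 : ℝ) ^ j * 2 ^ (N - j) = 2 ^ N := by
    rw [← pow_add]; congr 1; omega
  rw [div_pow, div_pow, div_mul_div_comm, hN, div_eq_mul_inv, h2]

lemma Icc_split (N1 N : ℕ) (hN1 : N1 ≤ N) (F : ℕ → ℝ) :
    ∑ j ∈ Finset.Icc N1 N, F j = F N1 + ∑ j ∈ Finset.Icc (N1 + 1) N, F j := by
  have h1 : Finset.Icc N1 N = insert N1 (Finset.Icc (N1 + 1) N) := by
    ext x; simp only [Finset.mem_Icc, Finset.mem_insert]; omega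
  rw [h1, Finset.sum_insert (by simp only [Finset.mem_Icc]; omega)]




lemma key (N N1 : ℕ) (hN1 : N1 ≤ N) (ε : ℝ) (hε0 : 0 ≤ ε) (hε1 : ε ≤ 1 / 2) :
    ((N.choose N1 : ℝ) * (2 : ℝ) ^ (-(N : ℤ)))
        * ((1 - 2 * ε) ^ N - 2 * (2 * ε * N) * (1 + 2 * ε) ^ N)
      ≤ binomTail N (1 / 2 - ε) N1 - binomTail N (1 / 2 + ε) (N1 + 1) ∧
    binomTail N (1 / 2 + ε) N1 - binomTail N (1 / 2 - ε) (N1 + 1)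
      ≤ ((N.choose N1 : ℝ) * (2 : ℝ) ^ (-(N : ℤ)))
        * ((1 + 2 * ε) ^ N * (1 + 2 * (2 * ε * N))) := by
  have ha1 : (1 : ℝ) ≤ 1 + 2 * ε := by linarith
  have ha0 : (0 : ℝ) ≤ 1 + 2 * ε := by linarith
  have hb0 : (0 : ℝ) ≤ 1 - 2 * ε := by linarith
  have hba : (1 : ℝ) - 2 * ε ≤ 1 + 2 * ε := by linarith
  have h2p : (0 : ℝ) < (2 : ℝ) ^ (-(N : ℤ)) := by positivity
  set F : ℕ → ℝ := fun j =>
    (N.choose j : ℝ) * ((1 + 2 * ε) ^ j * (1 - 2 * ε) ^ (N - j) * (2 : ℝ) ^ (-(N : ℤ))) with hF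
  set G : ℕ → ℝ := fun j =>
    (N.choose j : ℝ) * ((1 - 2 * ε) ^ j * (1 + 2 * ε) ^ (N - j) * (2 : ℝ) ^ (-(N : ℤ))) with hG
  have hrepP : ∀ k, binomTail N (1 / 2 + ε) k = ∑ j ∈ Finset.Icc k N, F j := by
    intro k
    simp only [binomTail, hF]
    apply Finset.sum_congr rfl
    intro j hj
    have hjN : j ≤ N := (Finset.mem_Icc.mp hj).2
    rw [show (1 : ℝ) - (1 / 2 + ε) = (1 - 2 * ε) / 2 by ring,
      show (1 : ℝ) / 2 + ε = (1 + 2 * ε) / 2 by ring, mul_assoc,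
      half_pow _ _ _ _ hjN]
  have hrepM : ∀ k, binomTail N (1 / 2 - ε) k = ∑ j ∈ Finset.Icc k N, G j := by
    intro k
    simp only [binomTail, hG]
    apply Finset.sum_congr rfl
    intro j hj
    have hjN : j ≤ N := (Finset.mem_Icc.mp hj).2
    rw [show (1 : ℝ) - (1 / 2 - ε) = (1 + 2 * ε) / 2 by ring,
      show (1 : ℝ) / 2 - ε = (1 - 2 * ε) / 2 by ring, mul_assoc,
      half_pow _ _ _ _ hjN]
  set k' : ℕ := max (N1 + 1) (N - N1) with hk'
  have hk'1 : N1 + 1 ≤ k' := le_max_left _ _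
  have hk'2 : N - N1 ≤ k' := le_max_right _ _
  -- shift of the difference sum
  have hshift : ∑ j ∈ Finset.Icc (N1 + 1) N, (F j - G j)
      = ∑ j ∈ Finset.Icc k' N, (F j - G j) := by
    rcases le_or_gt (N - N1) (N1 + 1) with h | h
    · rw [hk', max_eq_left h]
    · rw [hk', max_eq_right h.le]
      have hsplit : Finset.Icc (N1 + 1) N
          = Finset.Icc (N1 + 1) (N - N1 - 1) ∪ Finset.Icc (N - N1) N := by
        ext x; simp only [Finset.mem_Icc, Finset.mem_union]; omega
      have hdisj : Disjoint (Finset.Icc (N1 + 1) (N - N1 - 1)) (Finset.Icc (N - N1) N) := by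
        rw [Finset.disjoint_left]; intro x hx hx'
        simp only [Finset.mem_Icc] at hx hx'; omega
      rw [hsplit, Finset.sum_union hdisj]
      have hz := sum_refl N (N1 + 1) (N - N1 - 1) (by omega) (1 + 2 * ε) (1 - 2 * ε)
        ((2 : ℝ) ^ (-(N : ℤ)))
      simp only [hF, hG]
      rw [hz, zero_add]
  -- per-term bounds on the shifted sum
  have hterm : ∀ j ∈ Finset.Icc k' N,
      (0 ≤ F j - G j) ∧
      F j - G j ≤ (N.choose j : ℝ) * (2 * (j : ℝ) - (N : ℝ))
        * (4 * ε * (1 + 2 * ε) ^ N * (2 : ℝ) ^ (-(N : ℤ))) := by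
    intro j hj
    have hj' := Finset.mem_Icc.mp hj
    have hjN : j ≤ N := hj'.2
    have h2j : N + 1 ≤ 2 * j := by omega
    obtain ⟨m, d, hm, hd, hd1⟩ : ∃ m d, N - j = m ∧ j = m + d ∧ 1 ≤ d :=
      ⟨N - j, j - (N - j), rfl, by omega, by omega⟩
    have hmj : m + j = N := by omega
    have hdN : d ≤ N := by omega
    have hcast : (d : ℝ) = 2 * (j : ℝ) - (N : ℝ) := by
      have h1 : (m : ℝ) + (j : ℝ) = (N : ℝ) := by exact_mod_cast congrArg (Nat.cast : ℕ → ℝ) hmj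
      have h2 : (m : ℝ) + (d : ℝ) = (j : ℝ) := by exact_mod_cast congrArg (Nat.cast : ℕ → ℝ) hd.symm
      linarith
    have hcore : (1 + 2 * ε) ^ j * (1 - 2 * ε) ^ (N - j)
        - (1 - 2 * ε) ^ j * (1 + 2 * ε) ^ (N - j)
        = ((1 + 2 * ε) * (1 - 2 * ε)) ^ m * ((1 + 2 * ε) ^ d - (1 - 2 * ε) ^ d) := by
      rw [hm, hd, pow_add, pow_add, mul_pow]; ring
    have hdiff0 : 0 ≤ (1 + 2 * ε) ^ d - (1 - 2 * ε) ^ d :=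
      sub_nonneg.mpr (pow_le_pow_left₀ hb0 hba d)
    have habm0 : 0 ≤ ((1 + 2 * ε) * (1 - 2 * ε)) ^ m := pow_nonneg (mul_nonneg ha0 hb0) m
    have habm1 : ((1 + 2 * ε) * (1 - 2 * ε)) ^ m ≤ 1 :=
      pow_le_one₀ (mul_nonneg ha0 hb0) (by nlinarith)
    have hgeom : (1 + 2 * ε) ^ d - (1 - 2 * ε) ^ d
        ≤ (d : ℝ) * (1 + 2 * ε) ^ N * (4 * ε) := by
      rw [← geom_sum₂_mul (1 + 2 * ε) (1 - 2 * ε) d]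
      have hsum : ∑ i ∈ Finset.range d, (1 + 2 * ε) ^ i * (1 - 2 * ε) ^ (d - 1 - i)
          ≤ (d : ℝ) * (1 + 2 * ε) ^ N := by
        calc ∑ i ∈ Finset.range d, (1 + 2 * ε) ^ i * (1 - 2 * ε) ^ (d - 1 - i)
            ≤ ∑ i ∈ Finset.range d, (1 + 2 * ε) ^ N := by
              apply Finset.sum_le_sum
              intro i hi
              have hi' : i < d := Finset.mem_range.mp hi
              calc (1 + 2 * ε) ^ i * (1 - 2 * ε) ^ (d - 1 - i)
                  ≤ (1 + 2 * ε) ^ i * (1 + 2 * ε) ^ (d - 1 - i) := by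
                    apply mul_le_mul_of_nonneg_left (pow_le_pow_left₀ hb0 hba _)
                      (pow_nonneg ha0 _)
                _ = (1 + 2 * ε) ^ (i + (d - 1 - i)) := by rw [pow_add]
                _ ≤ (1 + 2 * ε) ^ N := pow_le_pow_right₀ ha1 (by omega)
        _ = (d : ℝ) * (1 + 2 * ε) ^ N := by
              rw [Finset.sum_const, Finset.card_range, nsmul_eq_mul]
      have h4e : (1 : ℝ) + 2 * ε - (1 - 2 * ε) = 4 * ε := by ring
      rw [h4e]
      exact mul_le_mul_of_nonneg_right hsum (by linarith)
    have hFG : F j - G j = ((N.choose j : ℝ) * (2 : ℝ) ^ (-(N : ℤ)))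
        * (((1 + 2 * ε) * (1 - 2 * ε)) ^ m * ((1 + 2 * ε) ^ d - (1 - 2 * ε) ^ d)) := by
      simp only [hF, hG]
      rw [← hcore]; ring
    have hCc0 : (0 : ℝ) ≤ (N.choose j : ℝ) * (2 : ℝ) ^ (-(N : ℤ)) := by positivity
    constructor
    · rw [hFG]; exact mul_nonneg hCc0 (mul_nonneg habm0 hdiff0)
    · rw [hFG]
      calc ((N.choose j : ℝ) * (2 : ℝ) ^ (-(N : ℤ)))
            * (((1 + 2 * ε) * (1 - 2 * ε)) ^ m * ((1 + 2 * ε) ^ d - (1 - 2 * ε) ^ d))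
          ≤ ((N.choose j : ℝ) * (2 : ℝ) ^ (-(N : ℤ)))
            * (1 * ((d : ℝ) * (1 + 2 * ε) ^ N * (4 * ε))) := by
            apply mul_le_mul_of_nonneg_left _ hCc0
            apply mul_le_mul habm1 hgeom hdiff0 (by norm_num)
        _ = (N.choose j : ℝ) * (2 * (j : ℝ) - (N : ℝ))
            * (4 * ε * (1 + 2 * ε) ^ N * (2 : ℝ) ^ (-(N : ℤ))) := by
            rw [← hcast]; ring
  -- sum bounds
  have hS0 : 0 ≤ ∑ j ∈ Finset.Icc k' N, (F j - G j) :=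
    Finset.sum_nonneg fun j hj => (hterm j hj).1
  have hch : (N - 1).choose (k' - 1) ≤ N.choose N1 := by
    rcases le_or_gt (N - N1) (N1 + 1) with h | h
    · rw [hk', max_eq_left h]
      simpa using Nat.choose_le_choose N1 (Nat.sub_le N 1)
    · rw [hk', max_eq_right h.le]
      have h2 : (N - 1).choose (N - N1 - 1) = (N - 1).choose N1 := by
        have hh := Nat.choose_symm (show N - N1 - 1 ≤ N - 1 by omega)
        rw [show N - 1 - (N - N1 - 1) = N1 by omega] at hh
        exact hh.symm
      rw [show N - N1 - 1 = N - N1 - 1 from rfl, h2]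
      exact Nat.choose_le_choose N1 (Nat.sub_le N 1)
  have hS1 : ∑ j ∈ Finset.Icc k' N, (F j - G j)
      ≤ ((N.choose N1 : ℝ) * (2 : ℝ) ^ (-(N : ℤ)))
        * ((1 + 2 * ε) ^ N * (2 * (2 * ε * (N : ℝ)))) := by
    calc ∑ j ∈ Finset.Icc k' N, (F j - G j)
        ≤ ∑ j ∈ Finset.Icc k' N, (N.choose j : ℝ) * (2 * (j : ℝ) - (N : ℝ))
            * (4 * ε * (1 + 2 * ε) ^ N * (2 : ℝ) ^ (-(N : ℤ))) :=
          Finset.sum_le_sum fun j hj => (hterm j hj).2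
      _ = (∑ j ∈ Finset.Icc k' N, (N.choose j : ℝ) * (2 * (j : ℝ) - (N : ℝ)))
            * (4 * ε * (1 + 2 * ε) ^ N * (2 : ℝ) ^ (-(N : ℤ))) := by
          rw [Finset.sum_mul]
      _ = ((N : ℝ) * (((N - 1).choose (k' - 1) : ℕ) : ℝ))
            * (4 * ε * (1 + 2 * ε) ^ N * (2 : ℝ) ^ (-(N : ℤ))) := by
          rw [tele_sum N k' (by omega)]
      _ ≤ ((N : ℝ) * ((N.choose N1 : ℕ) : ℝ))
            * (4 * ε * (1 + 2 * ε) ^ N * (2 : ℝ) ^ (-(N : ℤ))) := by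
          apply mul_le_mul_of_nonneg_right _ (by positivity)
          apply mul_le_mul_of_nonneg_left _ (Nat.cast_nonneg N)
          exact_mod_cast hch
      _ = ((N.choose N1 : ℝ) * (2 : ℝ) ^ (-(N : ℤ)))
            * ((1 + 2 * ε) ^ N * (2 * (2 * ε * (N : ℝ)))) := by ring
  -- endpoint bounds
  have hpowN : ∀ u v : ℝ, 0 ≤ u → u ≤ v → u ^ (N - N1) * u ^ N1 = u ^ N := by
    intro u v _ _; rw [← pow_add]; congr 1; omega
  have hFN1 : F N1 ≤ ((N.choose N1 : ℝ) * (2 : ℝ) ^ (-(N : ℤ))) * (1 + 2 * ε) ^ N := by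
    simp only [hF]
    have h1 : (1 + 2 * ε) ^ N1 * (1 - 2 * ε) ^ (N - N1) ≤ (1 + 2 * ε) ^ N := by
      calc (1 + 2 * ε) ^ N1 * (1 - 2 * ε) ^ (N - N1)
          ≤ (1 + 2 * ε) ^ N1 * (1 + 2 * ε) ^ (N - N1) :=
            mul_le_mul_of_nonneg_left (pow_le_pow_left₀ hb0 hba _) (pow_nonneg ha0 _)
        _ = (1 + 2 * ε) ^ N := by rw [← pow_add]; congr 1; omega
    calc (N.choose N1 : ℝ) * ((1 + 2 * ε) ^ N1 * (1 - 2 * ε) ^ (N - N1) * (2 : ℝ) ^ (-(N : ℤ)))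
        ≤ (N.choose N1 : ℝ) * ((1 + 2 * ε) ^ N * (2 : ℝ) ^ (-(N : ℤ))) := by
          apply mul_le_mul_of_nonneg_left _ (Nat.cast_nonneg _)
          exact mul_le_mul_of_nonneg_right h1 h2p.le
      _ = ((N.choose N1 : ℝ) * (2 : ℝ) ^ (-(N : ℤ))) * (1 + 2 * ε) ^ N := by ring
  have hGN1 : ((N.choose N1 : ℝ) * (2 : ℝ) ^ (-(N : ℤ))) * (1 - 2 * ε) ^ N ≤ G N1 := by
    simp only [hG]
    have h1 : (1 - 2 * ε) ^ N ≤ (1 - 2 * ε) ^ N1 * (1 + 2 * ε) ^ (N - N1) := by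
      calc (1 - 2 * ε) ^ N = (1 - 2 * ε) ^ N1 * (1 - 2 * ε) ^ (N - N1) := by
            rw [← pow_add]; congr 1; omega
        _ ≤ (1 - 2 * ε) ^ N1 * (1 + 2 * ε) ^ (N - N1) :=
            mul_le_mul_of_nonneg_left (pow_le_pow_left₀ hb0 hba _) (pow_nonneg hb0 _)
    calc ((N.choose N1 : ℝ) * (2 : ℝ) ^ (-(N : ℤ))) * (1 - 2 * ε) ^ N
        = (N.choose N1 : ℝ) * ((1 - 2 * ε) ^ N * (2 : ℝ) ^ (-(N : ℤ))) := by ring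
      _ ≤ (N.choose N1 : ℝ) * ((1 - 2 * ε) ^ N1 * (1 + 2 * ε) ^ (N - N1) * (2 : ℝ) ^ (-(N : ℤ))) := by
          apply mul_le_mul_of_nonneg_left _ (Nat.cast_nonneg _)
          exact mul_le_mul_of_nonneg_right h1 h2p.le
  -- assembling
  have hU : binomTail N (1 / 2 + ε) N1 - binomTail N (1 / 2 - ε) (N1 + 1)
      = F N1 + ∑ j ∈ Finset.Icc k' N, (F j - G j) := by
    rw [hrepP N1, hrepM (N1 + 1), Icc_split N1 N hN1 F, ← hshift, Finset.sum_sub_distrib]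
    ring
  have hL : binomTail N (1 / 2 - ε) N1 - binomTail N (1 / 2 + ε) (N1 + 1)
      = G N1 - ∑ j ∈ Finset.Icc k' N, (F j - G j) := by
    rw [hrepM N1, hrepP (N1 + 1), Icc_split N1 N hN1 G, ← hshift, Finset.sum_sub_distrib]
    ring
  constructor
  · rw [hL]
    have : ((N.choose N1 : ℝ) * (2 : ℝ) ^ (-(N : ℤ)))
        * ((1 - 2 * ε) ^ N - 2 * (2 * ε * N) * (1 + 2 * ε) ^ N)
        = ((N.choose N1 : ℝ) * (2 : ℝ) ^ (-(N : ℤ))) * (1 - 2 * ε) ^ N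
          - ((N.choose N1 : ℝ) * (2 : ℝ) ^ (-(N : ℤ)))
            * ((1 + 2 * ε) ^ N * (2 * (2 * ε * (N : ℝ)))) := by ring
    linarith
  · rw [hU]
    have : ((N.choose N1 : ℝ) * (2 : ℝ) ^ (-(N : ℤ)))
        * ((1 + 2 * ε) ^ N * (1 + 2 * (2 * ε * N)))
        = ((N.choose N1 : ℝ) * (2 : ℝ) ^ (-(N : ℤ))) * (1 + 2 * ε) ^ N
          + ((N.choose N1 : ℝ) * (2 : ℝ) ^ (-(N : ℤ)))
            * ((1 + 2 * ε) ^ N * (2 * (2 * ε * (N : ℝ)))) := by ring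
    linarith

set_option maxHeartbeats 1000000 in
lemma per_n (Nn N1n : ℕ) (hN1 : N1n ≤ Nn) (μn : Measure ℕ) [IsProbabilityMeasure μn]
    (x : ℝ) (hx0 : 0 ≤ x) (hx : x ≤ 1 / 2) (hS : 2 * (x * (Nn : ℝ)) ≤ 1 / 2)
    (hlo1 : binomTail Nn (1 / 2 - x) N1n ≤ (μn {m | N1n ≤ m}).toReal)
    (hhi1 : (μn {m | N1n ≤ m}).toReal ≤ binomTail Nn (1 / 2 + x) N1n)
    (hlo2 : binomTail Nn (1 / 2 - x) (N1n + 1) ≤ (μn {m | N1n + 1 ≤ m}).toReal)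
    (hhi2 : (μn {m | N1n + 1 ≤ m}).toReal ≤ binomTail Nn (1 / 2 + x) (N1n + 1)) :
    (1 - 2 * (x * (Nn : ℝ))) - 2 * (2 * (x * (Nn : ℝ))) / (1 - 2 * (x * (Nn : ℝ)))
      ≤ (μn {N1n}).toReal / ((Nn.choose N1n : ℝ) * (2 : ℝ) ^ (-(Nn : ℤ)))
    ∧ (μn {N1n}).toReal / ((Nn.choose N1n : ℝ) * (2 : ℝ) ^ (-(Nn : ℤ)))
      ≤ (1 + 2 * (2 * (x * (Nn : ℝ)))) / (1 - 2 * (x * (Nn : ℝ))) := by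
  have hNnn : (0 : ℝ) ≤ (Nn : ℝ) := Nat.cast_nonneg _
  have hSnn : (0 : ℝ) ≤ 2 * (x * (Nn : ℝ)) := by positivity
  have hp : (0 : ℝ) < (Nn.choose N1n : ℝ) * (2 : ℝ) ^ (-(Nn : ℤ)) := by
    have : 0 < Nn.choose N1n := Nat.choose_pos hN1
    have h2 : (0 : ℝ) < (2 : ℝ) ^ (-(Nn : ℤ)) := by positivity
    have h1 : (0 : ℝ) < (Nn.choose N1n : ℝ) := by exact_mod_cast this
    exact mul_pos h1 h2
  -- split the measure
  have hsplitset : {m : ℕ | N1n ≤ m} = {N1n} ∪ {m : ℕ | N1n + 1 ≤ m} := by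
    ext m; simp only [Set.mem_setOf_eq, Set.mem_union, Set.mem_singleton_iff]; omega
  have hdisj : Disjoint ({N1n} : Set ℕ) {m : ℕ | N1n + 1 ≤ m} := by
    rw [Set.disjoint_left]
    intro a ha ha'
    simp only [Set.mem_singleton_iff] at ha
    simp only [Set.mem_setOf_eq] at ha'
    omega
  have hadd : μn {m | N1n ≤ m} = μn {N1n} + μn {m | N1n + 1 ≤ m} := by
    rw [hsplitset, measure_union hdisj MeasurableSet.of_discrete]
  have hPeq : (μn {N1n}).toReal
      = (μn {m | N1n ≤ m}).toReal - (μn {m | N1n + 1 ≤ m}).toReal := by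
    rw [hadd, ENNReal.toReal_add (measure_ne_top _ _) (measure_ne_top _ _)]
    ring
  obtain ⟨hK1, hK2⟩ := key Nn N1n hN1 x hx0 hx
  have hPub : (μn {N1n}).toReal
      ≤ ((Nn.choose N1n : ℝ) * (2 : ℝ) ^ (-(Nn : ℤ)))
        * ((1 + 2 * x) ^ Nn * (1 + 2 * (2 * x * Nn))) := by
    rw [hPeq]; linarith
  have hPlb : ((Nn.choose N1n : ℝ) * (2 : ℝ) ^ (-(Nn : ℤ)))
        * ((1 - 2 * x) ^ Nn - 2 * (2 * x * Nn) * (1 + 2 * x) ^ Nn)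
      ≤ (μn {N1n}).toReal := by
    rw [hPeq]; linarith
  -- analytic bounds
  have hbN : 1 - 2 * (x * (Nn : ℝ)) ≤ (1 - 2 * x) ^ Nn := by
    have h := one_add_mul_le_pow (show (-2 : ℝ) ≤ -(2 * x) by linarith) Nn
    rw [show (1 : ℝ) + -(2 * x) = 1 - 2 * x by ring] at h
    nlinarith [h]
  have hSpos : (0 : ℝ) < 1 - 2 * (x * (Nn : ℝ)) := by linarith
  have haN0 : (0 : ℝ) ≤ (1 + 2 * x) ^ Nn := pow_nonneg (by linarith) _
  have habN : (1 + 2 * x) ^ Nn * (1 - 2 * x) ^ Nn ≤ 1 := by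
    rw [← mul_pow]
    exact pow_le_one₀ (by nlinarith) (by nlinarith)
  have haU : (1 + 2 * x) ^ Nn ≤ 1 / (1 - 2 * (x * (Nn : ℝ))) := by
    rw [le_div_iff₀ hSpos]
    calc (1 + 2 * x) ^ Nn * (1 - 2 * (x * (Nn : ℝ)))
        ≤ (1 + 2 * x) ^ Nn * (1 - 2 * x) ^ Nn :=
          mul_le_mul_of_nonneg_left hbN haN0
      _ ≤ 1 := habN
  have h2S : 2 * (2 * (x * (Nn : ℝ))) * ((1 + 2 * x) ^ Nn)
      ≤ 2 * (2 * (x * (Nn : ℝ))) / (1 - 2 * (x * (Nn : ℝ))) := by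
    calc 2 * (2 * (x * (Nn : ℝ))) * ((1 + 2 * x) ^ Nn)
        ≤ 2 * (2 * (x * (Nn : ℝ))) * (1 / (1 - 2 * (x * (Nn : ℝ)))) :=
          mul_le_mul_of_nonneg_left haU (by positivity)
      _ = 2 * (2 * (x * (Nn : ℝ))) / (1 - 2 * (x * (Nn : ℝ))) := by ring
  constructor
  · rw [le_div_iff₀ hp]
    have hA : (1 - 2 * (x * (Nn : ℝ))) - 2 * (2 * (x * (Nn : ℝ))) / (1 - 2 * (x * (Nn : ℝ)))
        ≤ (1 - 2 * x) ^ Nn - 2 * (2 * x * Nn) * (1 + 2 * x) ^ Nn := by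
      nlinarith [h2S, hbN]
    calc ((1 - 2 * (x * (Nn : ℝ))) - 2 * (2 * (x * (Nn : ℝ))) / (1 - 2 * (x * (Nn : ℝ))))
          * ((Nn.choose N1n : ℝ) * (2 : ℝ) ^ (-(Nn : ℤ)))
        ≤ ((1 - 2 * x) ^ Nn - 2 * (2 * x * Nn) * (1 + 2 * x) ^ Nn)
          * ((Nn.choose N1n : ℝ) * (2 : ℝ) ^ (-(Nn : ℤ))) :=
          mul_le_mul_of_nonneg_right hA hp.le
      _ = ((Nn.choose N1n : ℝ) * (2 : ℝ) ^ (-(Nn : ℤ)))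
          * ((1 - 2 * x) ^ Nn - 2 * (2 * x * Nn) * (1 + 2 * x) ^ Nn) := by ring
      _ ≤ (μn {N1n}).toReal := hPlb
  · rw [div_le_iff₀ hp]
    have hA : (1 + 2 * x) ^ Nn * (1 + 2 * (2 * x * Nn))
        ≤ (1 + 2 * (2 * (x * (Nn : ℝ)))) / (1 - 2 * (x * (Nn : ℝ))) := by
      have h1 : (1 + 2 * x) ^ Nn * (1 + 2 * (2 * x * Nn))
          ≤ (1 / (1 - 2 * (x * (Nn : ℝ)))) * (1 + 2 * (2 * x * Nn)) :=
        mul_le_mul_of_nonneg_right haU (by positivity)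
      have h2 : (1 / (1 - 2 * (x * (Nn : ℝ)))) * (1 + 2 * (2 * x * Nn))
          = (1 + 2 * (2 * (x * (Nn : ℝ)))) / (1 - 2 * (x * (Nn : ℝ))) := by ring
      linarith [h1, h2.le]
    calc (μn {N1n}).toReal
        ≤ ((Nn.choose N1n : ℝ) * (2 : ℝ) ^ (-(Nn : ℤ)))
          * ((1 + 2 * x) ^ Nn * (1 + 2 * (2 * x * Nn))) := hPub
      _ ≤ ((Nn.choose N1n : ℝ) * (2 : ℝ) ^ (-(Nn : ℤ)))
          * ((1 + 2 * (2 * (x * (Nn : ℝ)))) / (1 - 2 * (x * (Nn : ℝ)))) :=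
          mul_le_mul_of_nonneg_left hA hp.le
      _ = (1 + 2 * (2 * (x * (Nn : ℝ)))) / (1 - 2 * (x * (Nn : ℝ)))
          * ((Nn.choose N1n : ℝ) * (2 : ℝ) ^ (-(Nn : ℤ))) := by ring

/-- Let `ε_n = 2n^{−1/4}` and `N = N(n)` with `N(n) = o(n^{1/4})`. If `X_n` are
ℕ-valued random variables (given by their laws `μ n`) with
`Bin(N, 1/2 − ε_n) ⪯ X_n ⪯ Bin(N, 1/2 + ε_n)`, then for every `N1 = N1(n)` with
`0 ≤ N1 ≤ N` one has `P(X_n = N1) = (1 + o(1))·C(N, N1)·2^{−N}` as `n → ∞`. -/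

theorem stmt6 (N : ℕ → ℕ)
    (hN : Filter.Tendsto (fun n => (N n : ℝ) / (n : ℝ) ^ ((1 : ℝ) / 4)) Filter.atTop (nhds 0))
    (μ : ℕ → Measure ℕ) (hprob : ∀ n, IsProbabilityMeasure (μ n))
    (hdom : ∀ n k,
      binomTail (N n) ((1 : ℝ) / 2 - 2 * (n : ℝ) ^ (-(1 : ℝ) / 4)) k ≤ ((μ n) {m | k ≤ m}).toReal ∧
      ((μ n) {m | k ≤ m}).toReal ≤ binomTail (N n) ((1 : ℝ) / 2 + 2 * (n : ℝ) ^ (-(1 : ℝ) / 4)) k)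
    (N1 : ℕ → ℕ) (hN1 : ∀ n, N1 n ≤ N n) :
    Filter.Tendsto
      (fun n => ((μ n) {N1 n}).toReal / (((N n).choose (N1 n) : ℝ) * (2 : ℝ) ^ (-(N n : ℤ))))
      Filter.atTop (nhds 1) := by
  set s : ℕ → ℝ := fun n => 2 * (2 * (n : ℝ) ^ (-(1 : ℝ) / 4) * (N n : ℝ)) with hsdef
  have hs_eq : ∀ n, s n = 4 * ((N n : ℝ) / (n : ℝ) ^ ((1 : ℝ) / 4)) := by
    intro n
    have h : ((n : ℝ) ^ ((1 : ℝ) / 4))⁻¹ = (n : ℝ) ^ (-(1 : ℝ) / 4) := by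
      rw [neg_div, Real.rpow_neg (Nat.cast_nonneg n)]
    simp only [hsdef]
    rw [← h, div_eq_mul_inv ((N n : ℝ)) ((n : ℝ) ^ ((1 : ℝ) / 4))]
    ring
  have hs0 : Filter.Tendsto s Filter.atTop (nhds 0) := by
    have h4 : Filter.Tendsto (fun n => 4 * ((N n : ℝ) / (n : ℝ) ^ ((1 : ℝ) / 4))) Filter.atTop
        (nhds (4 * 0)) := hN.const_mul 4
    rw [mul_zero] at h4
    exact h4.congr fun n => (hs_eq n).symm
  have hεt : Filter.Tendsto (fun n : ℕ => 2 * (n : ℝ) ^ (-(1 : ℝ) / 4)) Filter.atTop (nhds 0) := by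
    have h1 : Filter.Tendsto (fun x : ℝ => x ^ (-((1 : ℝ) / 4))) Filter.atTop (nhds 0) :=
      tendsto_rpow_neg_atTop (by norm_num)
    have h2 : Filter.Tendsto (fun n : ℕ => ((n : ℝ)) ^ (-(1 : ℝ) / 4)) Filter.atTop (nhds 0) := by
      have := h1.comp (tendsto_natCast_atTop_atTop (R := ℝ))
      simpa [neg_div, Function.comp_def] using this
    simpa using h2.const_mul 2
  have hev1 : ∀ᶠ n : ℕ in Filter.atTop, 2 * (n : ℝ) ^ (-(1 : ℝ) / 4) ≤ 1 / 2 :=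
    hεt.eventually (eventually_le_nhds (by norm_num))
  have hev2 : ∀ᶠ n in Filter.atTop, s n ≤ 1 / 2 :=
    hs0.eventually (eventually_le_nhds (by norm_num))
  have h1t : Filter.Tendsto (fun n => 1 - s n) Filter.atTop (nhds 1) := by
    have hc : Filter.Tendsto (fun _ : ℕ => (1 : ℝ)) Filter.atTop (nhds 1) := tendsto_const_nhds
    simpa using hc.sub hs0
  have hLt : Filter.Tendsto (fun n => (1 - s n) - 2 * s n / (1 - s n)) Filter.atTop (nhds 1) := by
    have h2 : Filter.Tendsto (fun n => 2 * s n / (1 - s n)) Filter.atTop (nhds 0) := by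
      have := (hs0.const_mul 2).div h1t one_ne_zero
      simpa [Pi.div_def] using this
    have := h1t.sub h2
    simpa using this
  have hUt : Filter.Tendsto (fun n => (1 + 2 * s n) / (1 - s n)) Filter.atTop (nhds 1) := by
    have h2 : Filter.Tendsto (fun n => 1 + 2 * s n) Filter.atTop (nhds 1) := by
      have hc : Filter.Tendsto (fun _ : ℕ => (1 : ℝ)) Filter.atTop (nhds 1) := tendsto_const_nhds
      simpa using hc.add (hs0.const_mul 2)
    have := h2.div h1t one_ne_zero
    simpa [Pi.div_def] using this
  refine tendsto_of_tendsto_of_tendsto_of_le_of_le' hLt hUt ?_ ?_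
  · filter_upwards [hev1, hev2] with n h1 h2
    haveI := hprob n
    have hx0 : (0 : ℝ) ≤ 2 * (n : ℝ) ^ (-(1 : ℝ) / 4) := by positivity
    have hS : 2 * (2 * (n : ℝ) ^ (-(1 : ℝ) / 4) * (N n : ℝ)) ≤ 1 / 2 := by
      simpa [hsdef] using h2
    have := (per_n (N n) (N1 n) (hN1 n) (μ n) (2 * (n : ℝ) ^ (-(1 : ℝ) / 4)) hx0 h1 hS
      (hdom n (N1 n)).1 (hdom n (N1 n)).2 (hdom n (N1 n + 1)).1 (hdom n (N1 n + 1)).2).1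
    simpa [hsdef] using this
  · filter_upwards [hev1, hev2] with n h1 h2
    haveI := hprob n
    have hx0 : (0 : ℝ) ≤ 2 * (n : ℝ) ^ (-(1 : ℝ) / 4) := by positivity
    have hS : 2 * (2 * (n : ℝ) ^ (-(1 : ℝ) / 4) * (N n : ℝ)) ≤ 1 / 2 := by
      simpa [hsdef] using h2
    have := (per_n (N n) (N1 n) (hN1 n) (μ n) (2 * (n : ℝ) ^ (-(1 : ℝ) / 4)) hx0 h1 hS
      (hdom n (N1 n)).1 (hdom n (N1 n)).2 (hdom n (N1 n + 1)).1 (hdom n (N1 n + 1)).2).2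
    simpa [hsdef] using this
end
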